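/- Let G be a group with a topological partial action ({X_t}, {h_t}) on X, and let R' = {(x,r,s) ∈ X × G × G : x ∈ X_{r⁻¹s}}. Then R' is a groupoid under the multiplication (x,r,s)·(y,t,u) = (x,r,u), defined if and only if s = t and y = h_{s⁻¹r}(x), with inverse (x,r,s)⁻¹ = (h_{s⁻¹r}(x), s, r); in particular the inverse is well-defined (h_{s⁻¹r}(x) ∈ X_{s⁻¹r}), multiplication is associative where defined, and (x,r,s)·(x,r,s)⁻¹ = (x,r,r). -/
import Mathlib


/-- A partial action of a group `G` on a set `X`. -/
structure PartialAction (G : Type*) [Group G] (X : Type*) where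
  dom : G → Set X
  h : G → X → X
  dom_one : dom 1 = Set.univ
  h_one : ∀ x, h 1 x = x
  bijOn : ∀ t, Set.BijOn (h t) (dom t⁻¹) (dom t)
  image_inter : ∀ t s, h t '' (dom t⁻¹ ∩ dom s) = dom t ∩ dom (t * s)
  hcomp : ∀ t s x, x ∈ dom s⁻¹ ∩ dom (s⁻¹ * t⁻¹) → h t (h s x) = h (t * s) x

/-- A topological partial action: the domains are open and each `h t` is a homeomorphism
of `X_{t⁻¹}` onto `X_t` (continuity of the inverse is `continuousOn t⁻¹`). -/
structure TopPartialAction (G : Type*) [Group G] (X : Type*) [TopologicalSpace X]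
    extends PartialAction G X where
  isOpen_dom : ∀ t, IsOpen (dom t)
  continuousOn : ∀ t, ContinuousOn (h t) (dom t⁻¹)

/-- The relation `(r,x) ∼ (s,y) ↔ x ∈ X_{r⁻¹s} ∧ h_{s⁻¹r}(x) = y`. -/
def PartialAction.rel {G X : Type*} [Group G] (θ : PartialAction G X) :
    G × X → G × X → Prop :=
  fun p q => p.2 ∈ θ.dom (p.1⁻¹ * q.1) ∧ θ.h (q.1⁻¹ * p.1) p.2 = q.2

variable {G X : Type*} [Group G] [TopologicalSpace X]

/-- The set `R' = {(x,r,s) : x ∈ X_{r⁻¹s}}`. -/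
def Rprime (θ : TopPartialAction G X) : Set (X × G × G) :=
  {q | q.1 ∈ θ.dom (q.2.1⁻¹ * q.2.2)}

/-- `(x,r,s)` and `(y,t,u)` are composable iff `s = t` and `y = h_{s⁻¹r}(x)`. -/
def composable (θ : TopPartialAction G X) (p q : X × G × G) : Prop :=
  p.2.2 = q.2.1 ∧ q.1 = θ.h (p.2.2⁻¹ * p.2.1) p.1

/-- The product `(x,r,s)·(y,t,u) = (x,r,u)`. -/
def gmul (p q : X × G × G) : X × G × G := (p.1, p.2.1, q.2.2)

/-- The inverse `(x,r,s)⁻¹ = (h_{s⁻¹r}(x), s, r)`. -/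
def ginv (θ : TopPartialAction G X) (p : X × G × G) : X × G × G :=
  (θ.h (p.2.2⁻¹ * p.2.1) p.1, p.2.2, p.2.1)


namespace PartialAction
variable {G X : Type*} [Group G]

lemma h_mem (θ : PartialAction G X) {t : G} {x : X} (hx : x ∈ θ.dom t⁻¹) :
    θ.h t x ∈ θ.dom t := (θ.bijOn t).mapsTo hx

lemma h_cancel (θ : PartialAction G X) {t : G} {x : X} (hx : x ∈ θ.dom t⁻¹) :
    θ.h t⁻¹ (θ.h t x) = x := by
  rw [θ.hcomp t⁻¹ t x ⟨hx, by simp [θ.dom_one]⟩]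
  simp [θ.h_one]

lemma key (θ : PartialAction G X) {r s u : G} {x : X}
    (hx : x ∈ θ.dom (r⁻¹ * s)) (hy : θ.h (s⁻¹ * r) x ∈ θ.dom (s⁻¹ * u)) :
    x ∈ θ.dom (r⁻¹ * u) := by
  have hx' : x ∈ θ.dom (s⁻¹ * r)⁻¹ := by simpa [mul_inv_rev] using hx
  have hy1 : θ.h (s⁻¹ * r) x ∈ θ.dom (r⁻¹ * s)⁻¹ := by
    simpa [mul_inv_rev] using θ.h_mem hx'
  have himg : θ.h (r⁻¹ * s) (θ.h (s⁻¹ * r) x)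
      ∈ θ.dom (r⁻¹ * s) ∩ θ.dom ((r⁻¹ * s) * (s⁻¹ * u)) := by
    rw [← θ.image_inter]
    exact ⟨_, ⟨hy1, hy⟩, rfl⟩
  have hc : θ.h (r⁻¹ * s) (θ.h (s⁻¹ * r) x) = x := by
    have := θ.h_cancel (t := s⁻¹ * r) hx'
    simpa [mul_inv_rev] using this
  have h2 := himg.2
  rw [hc] at h2
  simpa [mul_assoc] using h2

lemma comp3 (θ : PartialAction G X) {r s u : G} {x : X}
    (hx : x ∈ θ.dom (r⁻¹ * s)) (hxu : x ∈ θ.dom (r⁻¹ * u)) :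
    θ.h (u⁻¹ * s) (θ.h (s⁻¹ * r) x) = θ.h (u⁻¹ * r) x := by
  have h1 : x ∈ θ.dom (s⁻¹ * r)⁻¹ ∩ θ.dom ((s⁻¹ * r)⁻¹ * (u⁻¹ * s)⁻¹) := by
    constructor
    · simpa [mul_inv_rev] using hx
    · simpa [mul_inv_rev, mul_assoc] using hxu
  have h2 := θ.hcomp (u⁻¹ * s) (s⁻¹ * r) x h1
  rw [h2]
  congr 1
  group

end PartialAction

/-- `R' = {(x,r,s) : x ∈ X_{r⁻¹s}}` is a groupoid under `(x,r,s)·(y,t,u) = (x,r,u)`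
(defined iff `s = t`, `y = h_{s⁻¹r}(x)`) with inverse `(x,r,s)⁻¹ = (h_{s⁻¹r}(x),s,r)`:
the inverse is well defined, multiplication is associative where defined, and
`(x,r,s)·(x,r,s)⁻¹ = (x,r,r)`. -/
theorem rprime_groupoid (θ : TopPartialAction G X) :
    -- products of composable elements of `R'` lie in `R'`
    (∀ p ∈ Rprime θ, ∀ q ∈ Rprime θ, composable θ p q → gmul p q ∈ Rprime θ) ∧
    -- the inverse is well defined: `h_{s⁻¹r}(x) ∈ X_{s⁻¹r}`
    (∀ p ∈ Rprime θ, ginv θ p ∈ Rprime θ) ∧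
    -- associativity where defined
    (∀ p ∈ Rprime θ, ∀ q ∈ Rprime θ, ∀ w ∈ Rprime θ,
      composable θ p q → composable θ q w →
        composable θ (gmul p q) w ∧ composable θ p (gmul q w) ∧
          gmul (gmul p q) w = gmul p (gmul q w)) ∧
    (∀ p ∈ Rprime θ, ∀ q ∈ Rprime θ, ∀ w ∈ Rprime θ, composable θ p q →
      (composable θ (gmul p q) w ↔ composable θ q w)) ∧
    -- `(x,r,s)·(x,r,s)⁻¹ = (x,r,r)`
    (∀ p ∈ Rprime θ, composable θ p (ginv θ p) ∧
      gmul p (ginv θ p) = (p.1, p.2.1, p.2.1)) := by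
  refine ⟨?_, ?_, ?_, ?_, ?_⟩
  · rintro ⟨x, r, s⟩ hp ⟨y, t, u⟩ hq ⟨h1, h2⟩
    simp only [Rprime, Set.mem_setOf_eq] at hp hq ⊢
    subst h1 h2
    exact θ.toPartialAction.key hp hq
  · rintro ⟨x, r, s⟩ hp
    simp only [Rprime, Set.mem_setOf_eq, ginv] at hp ⊢
    refine θ.toPartialAction.h_mem ?_
    simpa [mul_inv_rev] using hp
  · rintro ⟨x, r, s⟩ hp ⟨y, t, u⟩ hq ⟨z, t', v⟩ hw ⟨h1, h2⟩ ⟨h3, h4⟩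
    simp only [Rprime, Set.mem_setOf_eq] at hp hq hw
    simp only [composable, gmul] at h1 h2 h3 h4
    subst h1 h2 h3 h4
    have hxu : x ∈ θ.dom (r⁻¹ * u) := θ.toPartialAction.key hp hq
    refine ⟨⟨rfl, ?_⟩, ⟨rfl, rfl⟩, rfl⟩
    simpa [gmul] using θ.toPartialAction.comp3 hp hxu
  · rintro ⟨x, r, s⟩ hp ⟨y, t, u⟩ hq ⟨z, t', v⟩ hw ⟨h1, h2⟩
    simp only [Rprime, Set.mem_setOf_eq] at hp hq hw
    simp only [composable, gmul] at h2 ⊢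
    subst h1 h2
    have hxu : x ∈ θ.dom (r⁻¹ * u) := θ.toPartialAction.key hp hq
    have hcmp := θ.toPartialAction.comp3 hp hxu
    constructor
    · rintro ⟨h3, h4⟩
      subst h3
      exact ⟨rfl, by rw [hcmp]; exact h4⟩
    · rintro ⟨h3, h4⟩
      subst h3
      exact ⟨rfl, by rw [← hcmp]; exact h4⟩
  · rintro ⟨x, r, s⟩ hp
    exact ⟨⟨rfl, rfl⟩, rfl⟩
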